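/- Let D ⊆ ℝ be nonempty with finite supremum s_D, T : ℝⁿ → ℝ, x ∈ Dⁿ, α ∈ (0,1), and φ := sup_{z ∈ S_{D,T}(x)} z_{(1)} with φ < s_D. Let ε > 0 and set γ := min( α, ( ε/(3(s_D − φ)) )ⁿ ). Then the quantiles of M := b_{D,T}(x,U) satisfy Q(1 − α + γ, M) ≤ Q(1 − α, M) + ε/3. -/

import Mathlib

open MeasureTheory Set

/-- The sorted rearrangement (order statistics) of a finite real vector:
`sortedVec x i` is the (i+1)-st order statistic `x_{(i+1)}` (0-indexed). -/
noncomputable def sortedVec {n : ℕ} (x : Fin n → ℝ) : Fin n → ℝ :=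
  x ∘ ⇑(Tuple.sort x)

/-- The induced mean `m(x, ℓ) = s - ∑ ℓ_{(i)} (x_{(i+1)} - x_{(i)})`, with `x_{(n+1)} := s`. -/
noncomputable def inducedMean {n : ℕ} (s : ℝ) (x ℓ : Fin n → ℝ) : ℝ :=
  s - ∑ i : Fin n, sortedVec ℓ i * ((Fin.snoc (sortedVec x) s : Fin (n+1) → ℝ) i.succ - sortedVec x i)

/-- `S_{D,T}(x) = {y ∈ Dⁿ : T y ≤ T x}`. -/
def SsetD {n : ℕ} (D : Set ℝ) (T : (Fin n → ℝ) → ℝ) (x : Fin n → ℝ) : Set (Fin n → ℝ) :=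
  {y | (∀ i, y i ∈ D) ∧ T y ≤ T x}

/-- `b_{D,T}(x, u) = sup_{z ∈ S_{D,T}(x)} m_{sup D}(z, u)`. -/
noncomputable def bfun {n : ℕ} (D : Set ℝ) (T : (Fin n → ℝ) → ℝ) (x u : Fin n → ℝ) : ℝ :=
  sSup ((fun z => inducedMean (sSup D) z u) '' SsetD D T x)

/-- The uniform probability measure on `[0,1]`. -/
noncomputable def unif01 : Measure ℝ := volume.restrict (Icc (0:ℝ) 1)

/-- The law of an i.i.d. sample of size `n` from Uniform(0,1). -/
noncomputable def unifPi (n : ℕ) : Measure (Fin n → ℝ) := Measure.pi fun _ => unif01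

/-- The `p`-quantile of the random variable `Y` under `μ`:
`Q(p, Y) = inf {y : P(Y ≤ y) ≥ p}`. -/
noncomputable def rquantile {Ω : Type*} [MeasurableSpace Ω] (μ : Measure Ω)
    (Y : Ω → ℝ) (p : ℝ) : ℝ :=
  sInf {y : ℝ | ENNReal.ofReal p ≤ μ {ω | Y ω ≤ y}}

/-- The upper confidence bound `b^α_{D,T}(x) = Q(1 - α, b_{D,T}(x, U))`, `U` i.i.d. Uniform(0,1). -/
noncomputable def ucb {n : ℕ} (D : Set ℝ) (T : (Fin n → ℝ) → ℝ) (α : ℝ)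
    (x : Fin n → ℝ) : ℝ :=
  rquantile (unifPi n) (bfun D T x) (1 - α)

/-- The stairstep function `G_{x,ℓ}` with top value at `s`. -/
noncomputable def stairstep {n : ℕ} (s : ℝ) (x ℓ : Fin n → ℝ) (t : ℝ) : ℝ :=
  if s ≤ t then 1 else sSup ({0} ∪ (sortedVec ℓ '' {i | sortedVec x i ≤ t}))

/-- The `k`-th smallest value (1-indexed) among `m 0, …, m (L-1)`. -/
noncomputable def kthSmallest {L : ℕ} (m : Fin L → ℝ) (k : ℕ) : ℝ :=
  sInf {y : ℝ | k ≤ Nat.card {j : Fin L // m j ≤ y}}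

/-!
Write `s = sup D` and `M(u) = b_{D,T}(x, u)`. The induced mean `m(z, u)` is `s` minus a
combination of the spacings of `z`, with weights among the `u_i`; the spacings are nonnegative and
sum to `s - z_{(1)}`, and `z_{(1)} ≤ φ` with near equality for some `z ∈ S_{D,T}(x)`. Hence
`s - (max u)(s - φ) ≤ M(u) ≤ s - (min u)(s - φ)` on `[0,1]ⁿ`. With `δ = ε / (3 (s - φ))`, on a cube
`[b - δ, b)ⁿ ⊆ [0,1]ⁿ` the value `M` is above `y = s - b (s - φ)` but at most `y + ε/3`; choosing
`b` so that `y` is any level of probability at least `1 - α`, the level `y + ε/3` has probability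
at least `1 - α + δⁿ`.
-/

lemma Fin.sum_succ_sub_castSucc {M : Type*} [AddCommGroup M] {n : ℕ} (g : Fin (n + 1) → M) :
    ∑ i : Fin n, (g i.succ - g i.castSucc) = g (Fin.last n) - g 0 := by
  rw [Finset.sum_sub_distrib, sub_eq_sub_iff_add_eq_add, add_comm, ← Fin.sum_univ_succ,
    Fin.sum_univ_castSucc, add_comm]

lemma Fin.snoc_castSucc_le_snoc_succ {α : Type*} [Preorder α] {n : ℕ} {f : Fin n → α}
    (hf : Monotone f) {x : α} (hx : ∀ i, f i ≤ x) (i : Fin n) :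
    (Fin.snoc f x : Fin (n + 1) → α) i.castSucc ≤ (Fin.snoc f x : Fin (n + 1) → α) i.succ := by
  obtain ⟨j, hj⟩ | hlast := i.succ.eq_castSucc_or_eq_last
  · rw [hj, Fin.snoc_castSucc, Fin.snoc_castSucc]
    exact hf (Fin.castSucc_lt_castSucc_iff.1 (hj ▸ i.castSucc_lt_succ)).le
  · rw [hlast, Fin.snoc_castSucc, Fin.snoc_last]
    exact hx i

/-- The spacings `x_{(i+1)} - x_{(i)}` of the order statistics, with `x_{(n+1)} := s`. -/
noncomputable def spacing {n : ℕ} (s : ℝ) (z : Fin n → ℝ) (i : Fin n) : ℝ :=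
  (Fin.snoc (sortedVec z) s : Fin (n + 1) → ℝ) i.succ - sortedVec z i

section Spacing

variable {n : ℕ} {s : ℝ} {z : Fin n → ℝ}

lemma inducedMean_eq_sub_sum_spacing (u : Fin n → ℝ) :
    inducedMean s z u = s - ∑ i, sortedVec u i * spacing s z i :=
  rfl

lemma spacing_nonneg (hz : ∀ i, z i ≤ s) (i : Fin n) : 0 ≤ spacing s z i := by
  have h := Fin.snoc_castSucc_le_snoc_succ (Tuple.monotone_sort z) (fun j => hz _) i
  rw [Fin.snoc_castSucc] at h
  exact sub_nonneg.2 h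

lemma sum_spacing (hn : 0 < n) : ∑ i, spacing s z i = s - sortedVec z ⟨0, hn⟩ := by
  have h := Fin.sum_succ_sub_castSucc (Fin.snoc (sortedVec z) s : Fin (n + 1) → ℝ)
  simp only [Fin.snoc_castSucc, Fin.snoc_last] at h
  exact h.trans (congrArg (s - ·) (Fin.snoc_castSucc (α := fun _ => ℝ) _ _ ⟨0, hn⟩))

lemma inducedMean_le (hn : 0 < n) (hz : ∀ i, z i ≤ s) {u : Fin n → ℝ} {a : ℝ}
    (hu : ∀ i, a ≤ u i) : inducedMean s z u ≤ s - a * (s - sortedVec z ⟨0, hn⟩) := by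
  rw [inducedMean_eq_sub_sum_spacing, ← sum_spacing hn, Finset.mul_sum]
  exact sub_le_sub_left (Finset.sum_le_sum fun i _ =>
    mul_le_mul_of_nonneg_right (hu _) (spacing_nonneg hz i)) s

lemma le_inducedMean (hn : 0 < n) (hz : ∀ i, z i ≤ s) {u : Fin n → ℝ} {b : ℝ}
    (hu : ∀ i, u i ≤ b) : s - b * (s - sortedVec z ⟨0, hn⟩) ≤ inducedMean s z u := by
  rw [inducedMean_eq_sub_sum_spacing, ← sum_spacing hn, Finset.mul_sum]
  exact sub_le_sub_left (Finset.sum_le_sum fun i _ =>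
    mul_le_mul_of_nonneg_right (hu _) (spacing_nonneg hz i)) s

end Spacing

section SupInducedMean

variable {n : ℕ} (hn : 0 < n) {s φ : ℝ} {S : Set (Fin n → ℝ)}
  (hSs : ∀ z ∈ S, ∀ i, z i ≤ s) (hφ : IsLUB ((fun z => sortedVec z ⟨0, hn⟩) '' S) φ)
include hSs hφ

lemma sSup_inducedMean_le (hS : S.Nonempty) {u : Fin n → ℝ} {a : ℝ} (ha : 0 ≤ a)
    (hu : ∀ i, a ≤ u i) :
    sSup ((fun z => inducedMean s z u) '' S) ≤ s - a * (s - φ) := by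
  refine csSup_le (hS.image _) ?_
  rintro _ ⟨z, hz, rfl⟩
  have hz₁ : sortedVec z ⟨0, hn⟩ ≤ φ := hφ.1 ⟨z, hz, rfl⟩
  exact (inducedMean_le hn (hSs z hz) hu).trans
    (sub_le_sub_left (mul_le_mul_of_nonneg_left (sub_le_sub_left hz₁ s) ha) s)

lemma le_sSup_inducedMean (hS : S.Nonempty) {u : Fin n → ℝ} (hu₀ : ∀ i, 0 ≤ u i) {b : ℝ}
    (hb : 0 ≤ b) (hu : ∀ i, u i ≤ b) :
    s - b * (s - φ) ≤ sSup ((fun z => inducedMean s z u) '' S) := by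
  have hbdd : BddAbove ((fun z => inducedMean s z u) '' S) := by
    refine ⟨s, ?_⟩
    rintro _ ⟨z, hz, rfl⟩
    simpa using inducedMean_le hn (hSs z hz) hu₀
  have hmono : Monotone fun t => s - b * (s - t) := fun t t' h =>
    sub_le_sub_left (mul_le_mul_of_nonneg_left (sub_le_sub_left h s) hb) s
  have hlub := (Continuous.leftOrdContinuous (by fun_prop) hmono) (hS.image _) hφ
  refine hlub.2 ?_
  rintro _ ⟨_, ⟨z, hz, rfl⟩, rfl⟩
  exact (le_inducedMean hn (hSs z hz) hu).trans (le_csSup hbdd ⟨z, hz, rfl⟩)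

end SupInducedMean

instance : IsProbabilityMeasure unif01 :=
  ⟨by simp [unif01]⟩

instance (n : ℕ) : IsProbabilityMeasure (unifPi n) := by
  unfold unifPi
  infer_instance

lemma unifPi_pi_Ico {n : ℕ} {a b : ℝ} (ha : 0 ≤ a) (hab : a ≤ b) (hb : b ≤ 1) :
    unifPi n (univ.pi fun _ => Ico a b) = ENNReal.ofReal ((b - a) ^ n) := by
  have hIco : Ico a b ⊆ Icc 0 1 := fun t ht => ⟨ha.trans ht.1, ht.2.le.trans hb⟩
  simp [unifPi, Measure.pi_pi, unif01, Measure.restrict_apply measurableSet_Ico,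
    inter_eq_left.2 hIco, ENNReal.ofReal_pow (sub_nonneg.2 hab)]

lemma ae_unifPi_mem_Icc (n : ℕ) : ∀ᵐ u ∂unifPi n, ∀ i, u i ∈ Icc (0 : ℝ) 1 :=
  Filter.eventually_all.2 fun _ =>
    Measure.tendsto_eval_ae_ae.eventually (ae_restrict_mem measurableSet_Icc)

section Quantile

variable {Ω : Type*} [MeasurableSpace Ω] {μ : Measure Ω} {Y : Ω → ℝ}

lemma le_of_ofReal_le_measure_le {φ p y : ℝ} (hY : ∀ᵐ ω ∂μ, φ ≤ Y ω) (hp : 0 < p)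
    (hy : ENNReal.ofReal p ≤ μ {ω | Y ω ≤ y}) : φ ≤ y := by
  by_contra! hyφ
  have hnull : μ {ω | Y ω ≤ y} = 0 :=
    measure_mono_null (fun ω hω => not_le.2 (lt_of_le_of_lt hω hyφ)) (ae_iff.1 hY)
  exact (ENNReal.ofReal_pos.2 hp).not_ge (hnull ▸ hy)

lemma ofReal_le_measure_le_of_ae [IsProbabilityMeasure μ] {p t : ℝ} (hp : p ≤ 1)
    (hY : ∀ᵐ ω ∂μ, Y ω ≤ t) : ENNReal.ofReal p ≤ μ {ω | Y ω ≤ t} :=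
  calc ENNReal.ofReal p ≤ μ univ := by simpa using hp
    _ ≤ μ {ω | Y ω ≤ t} + μ {ω | Y ω ≤ t}ᶜ := measure_univ_le_add_compl _
    _ = μ {ω | Y ω ≤ t} := by rw [show μ {ω | Y ω ≤ t}ᶜ = 0 from ae_iff.1 hY, add_zero]

lemma rquantile_le_add_of_forall {p q c : ℝ} (hne : ∃ y, ENNReal.ofReal p ≤ μ {ω | Y ω ≤ y})
    (hbdd : BddBelow {y | ENNReal.ofReal q ≤ μ {ω | Y ω ≤ y}})
    (h : ∀ y, ENNReal.ofReal p ≤ μ {ω | Y ω ≤ y} → ENNReal.ofReal q ≤ μ {ω | Y ω ≤ y + c}) :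
    rquantile μ Y q ≤ rquantile μ Y p + c := by
  rw [← sub_le_iff_le_add]
  exact le_csInf hne fun y hy => sub_le_iff_le_add.2 (csInf_le hbdd (h y hy))

end Quantile

section Cube

variable {n : ℕ} (hn : 0 < n) {s φ : ℝ} {S : Set (Fin n → ℝ)} (hS : S.Nonempty)
  (hSs : ∀ z ∈ S, ∀ i, z i ≤ s) (hφ : IsLUB ((fun z => sortedVec z ⟨0, hn⟩) '' S) φ)
include hS hSs hφ

/-- On the cube `[a, b)ⁿ` the supremum lies in `(s - b (s - φ), s - a (s - φ)]`, so raising the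
level from `s - b (s - φ)` to `s - a (s - φ)` gains at least the mass of the cube. -/
lemma unifPi_sublevel_add_le (hφs : φ < s) {a b : ℝ} (ha : 0 ≤ a) (hab : a ≤ b) (hb : b ≤ 1) :
    unifPi n {u | sSup ((fun z => inducedMean s z u) '' S) ≤ s - b * (s - φ)}
        + ENNReal.ofReal ((b - a) ^ n)
      ≤ unifPi n {u | sSup ((fun z => inducedMean s z u) '' S) ≤ s - a * (s - φ)} := by
  set M := fun u => sSup ((fun z => inducedMean s z u) '' S)
  set C : Set (Fin n → ℝ) := univ.pi fun _ => Ico a b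
  have hCM : C ⊆ {u | M u ≤ s - a * (s - φ)} := fun u hu =>
    sSup_inducedMean_le hn hSs hφ hS ha fun i => (hu i (mem_univ i)).1
  have hdisj : Disjoint {u | M u ≤ s - b * (s - φ)} C := by
    refine Set.disjoint_right.2 fun u hu hMu => ?_
    have : Nonempty (Fin n) := ⟨⟨0, hn⟩⟩
    obtain ⟨i₀, hi₀⟩ := Finite.exists_max u
    have hlt : u i₀ < b := (hu i₀ (mem_univ i₀)).2
    have hle := le_sSup_inducedMean hn hSs hφ hS (fun i => ha.trans (hu i (mem_univ i)).1)
      (ha.trans (hu i₀ (mem_univ i₀)).1) hi₀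
    exact (hMu.trans_lt (sub_lt_sub_left (mul_lt_mul_of_pos_right hlt (sub_pos.2 hφs)) s)).not_ge
      hle
  have hmono : {u | M u ≤ s - b * (s - φ)} ⊆ {u | M u ≤ s - a * (s - φ)} :=
    fun u hu => le_trans hu (sub_le_sub_left
      (mul_le_mul_of_nonneg_right hab (sub_pos.2 hφs).le) s)
  calc unifPi n {u | M u ≤ s - b * (s - φ)} + ENNReal.ofReal ((b - a) ^ n)
      = unifPi n ({u | M u ≤ s - b * (s - φ)} ∪ C) := by
        rw [measure_union hdisj (MeasurableSet.univ_pi fun _ => measurableSet_Ico),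
          unifPi_pi_Ico ha hab hb]
    _ ≤ unifPi n {u | M u ≤ s - a * (s - φ)} := measure_mono (union_subset hmono hCM)

theorem rquantile_sSup_inducedMean_add_le (hφs : φ < s) {α ε : ℝ} (hα : α ∈ Ioo (0 : ℝ) 1)
    (hε : 0 < ε) :
    rquantile (unifPi n) (fun u => sSup ((fun z => inducedMean s z u) '' S))
        (1 - α + min α ((ε / (3 * (s - φ))) ^ n))
      ≤ rquantile (unifPi n) (fun u => sSup ((fun z => inducedMean s z u) '' S)) (1 - α)
        + ε / 3 := by
  set M := fun u => sSup ((fun z => inducedMean s z u) '' S)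
  set δ := ε / (3 * (s - φ))
  set γ := min α (δ ^ n)
  have hδ : 0 ≤ δ := by have := sub_pos.2 hφs; positivity
  have hγ : 0 ≤ γ := le_min hα.1.le (pow_nonneg hδ n)
  have hM_le : ∀ᵐ u ∂unifPi n, M u ≤ s := (ae_unifPi_mem_Icc n).mono fun u hu => by
    simpa using sSup_inducedMean_le hn hSs hφ hS le_rfl fun i => (hu i).1
  have hM_ge : ∀ᵐ u ∂unifPi n, φ ≤ M u := (ae_unifPi_mem_Icc n).mono fun u hu => by
    simpa using le_sSup_inducedMean hn hSs hφ hS (fun i => (hu i).1) zero_le_one fun i => (hu i).2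
  refine rquantile_le_add_of_forall ⟨s, ofReal_le_measure_le_of_ae (by linarith [hα.1]) hM_le⟩
    ⟨φ, fun y hy => le_of_ofReal_le_measure_le hM_ge (by linarith [hα.2]) hy⟩ fun y hy => ?_
  by_cases hys : s ≤ y + ε / 3
  · exact ofReal_le_measure_le_of_ae (by linarith [min_le_left α (δ ^ n)])
      (hM_le.mono fun u hu => hu.trans hys)
  have hyφ := le_of_ofReal_le_measure_le hM_ge (by linarith [hα.2]) hy
  have hsφ : 0 < s - φ := sub_pos.2 hφs
  set b := (s - y) / (s - φ)
  have hb : s - b * (s - φ) = y := by simp only [b]; field_simp; ring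
  have hbδ : s - (b - δ) * (s - φ) = y + ε / 3 := by simp only [b, δ]; field_simp; ring
  have hcube := unifPi_sublevel_add_le hn hS hSs hφ hφs (a := b - δ) (b := b)
    ((mul_nonneg_iff_of_pos_right hsφ).1 (by linarith)) (by linarith)
    ((mul_le_iff_le_one_left hsφ).1 (by linarith))
  rw [hb, hbδ, sub_sub_cancel] at hcube
  calc ENNReal.ofReal (1 - α + γ) ≤ ENNReal.ofReal (1 - α) + ENNReal.ofReal (δ ^ n) := by
        rw [← ENNReal.ofReal_add (by linarith [hα.2]) (pow_nonneg hδ n)]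
        exact ENNReal.ofReal_le_ofReal (by linarith [min_le_right α (δ ^ n)])
    _ ≤ unifPi n {u | M u ≤ y} + ENNReal.ofReal (δ ^ n) := by gcongr
    _ ≤ unifPi n {u | M u ≤ y + ε / 3} := hcube

end Cube

theorem stmt16_general {n : ℕ} (hn : 0 < n) (D : Set ℝ) (hbdd : BddAbove D)
    (T : (Fin n → ℝ) → ℝ) (x : Fin n → ℝ) (hx : ∀ i, x i ∈ D)
    (α : ℝ) (hα : α ∈ Set.Ioo (0:ℝ) 1)
    (φ : ℝ) (hφdef : φ = sSup ((fun z => sortedVec z ⟨0, hn⟩) '' SsetD D T x))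
    (hφ : φ < sSup D) (ε : ℝ) (hε : 0 < ε) :
    rquantile (unifPi n) (bfun D T x)
        (1 - α + min α ((ε / (3 * (sSup D - φ))) ^ n))
      ≤ rquantile (unifPi n) (bfun D T x) (1 - α) + ε / 3 := by
  have hxS : x ∈ SsetD D T x := ⟨hx, le_rfl⟩
  have hSs : ∀ z ∈ SsetD D T x, ∀ i, z i ≤ sSup D := fun z hz i => le_csSup hbdd (hz.1 i)
  have hlub : IsLUB ((fun z => sortedVec z ⟨0, hn⟩) '' SsetD D T x) φ :=
    hφdef ▸ isLUB_csSup ⟨_, x, hxS, rfl⟩ ⟨sSup D, by rintro _ ⟨z, hz, rfl⟩; exact hSs z hz _⟩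
  exact rquantile_sSup_inducedMean_add_le hn ⟨x, hxS⟩ hSs hlub hφ hα hε

/-- with `φ = sup_{z ∈ S_{D,T}(x)} z_{(1)} < sup D`, `ε > 0` and
`γ = min(α, (ε/(3(sup D - φ)))ⁿ)`, the quantiles of `M = b_{D,T}(x, U)` satisfy
`Q(1 - α + γ, M) ≤ Q(1 - α, M) + ε/3`. -/
theorem stmt16 {n : ℕ} (hn : 0 < n) (D : Set ℝ) (hD : D.Nonempty) (hbdd : BddAbove D)
    (T : (Fin n → ℝ) → ℝ) (x : Fin n → ℝ) (hx : ∀ i, x i ∈ D)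
    (α : ℝ) (hα : α ∈ Set.Ioo (0:ℝ) 1)
    (φ : ℝ) (hφdef : φ = sSup ((fun z => sortedVec z ⟨0, hn⟩) '' SsetD D T x))
    (hφ : φ < sSup D) (ε : ℝ) (hε : 0 < ε) :
    rquantile (unifPi n) (bfun D T x)
        (1 - α + min α ((ε / (3 * (sSup D - φ))) ^ n))
      ≤ rquantile (unifPi n) (bfun D T x) (1 - α) + ε / 3 :=
  stmt16_general hn D hbdd T x hx α hα φ hφdef hφ ε hε
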